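/- arXiv:math/0405312 — 3 statements merged into one kernel-verified Lean document; each statement's English description precedes it below -/
import Mathlib

section
/- For every family (j_1,...,j_n) with j_m ∈ [i_m], the Perm operad composition map e^n_k ↦ e^{i_1+...+i_n}_{i_1+...+i_{k-1}+j_k}, viewed as a function from [n] to [i_1+...+i_n], is injective. Hence Perm is a basic-set operad. -/
open Finset

lemma aux_strict (n : ℕ) (i j : ℕ → ℕ) (hj : ∀ m < n, j m < i m)
    {a b : ℕ} (hab : a < b) (ha : a < n) :
    (∑ r ∈ range a, i r) + j a < (∑ r ∈ range b, i r) + j b := by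
  calc (∑ r ∈ range a, i r) + j a < (∑ r ∈ range a, i r) + i a := by
        exact Nat.add_lt_add_left (hj a ha) _
    _ = ∑ r ∈ range (a+1), i r := (Finset.sum_range_succ i a).symm
    _ ≤ ∑ r ∈ range b, i r := Finset.sum_le_sum_of_subset
        (Finset.range_subset_range.mpr hab)
    _ ≤ (∑ r ∈ range b, i r) + j b := Nat.le_add_right _ _

/-- For every family `(j_1, …, j_n)` with `j_m ∈ [i_m]` (0-indexed:
`j m < i m`), the `Perm` operad composition map
`e^n_k ↦ e^{i_1+⋯+i_n}_{i_1+⋯+i_{k-1}+j_k}`, i.e. `k ↦ (∑_{r<k} i r) + j k`,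
viewed as a function from `[n]` to `[i_1+⋯+i_n]`, is injective.  Hence `Perm` is a
basic-set operad. -/
theorem stmt_5 (n : ℕ) (i j : ℕ → ℕ) (hj : ∀ m < n, j m < i m)
    (k₁ k₂ : ℕ) (hk₁ : k₁ < n) (hk₂ : k₂ < n)
    (h : (∑ r ∈ range k₁, i r) + j k₁ = (∑ r ∈ range k₂, i r) + j k₂) :
    k₁ = k₂ := by
  rcases lt_trichotomy k₁ k₂ with hlt | heq | hgt
  · exact absurd h (Nat.ne_of_lt (aux_strict n i j hj hlt hk₁))
  · exact heq
  · exact absurd h.symm (Nat.ne_of_lt (aux_strict n i j hj hgt hk₂))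
end

section
/- In any commutative trialgebra, the identity (a ∙ a') * (b * b') = (a * b) ∙ (a' * b') holds for all elements a, a', b, b'. -/
/-- A commutative trialgebra over a commutative ring `R`: an `R`-module `A` with
two bilinear binary operations `*` (star) and `∙` (dot) such that `(A, *)` is a
`Perm`-algebra, `(A, ∙)` is a commutative (associative) algebra, and the two
compatibility relations hold. -/
structure CommTrialgebra (R : Type*) (A : Type*) [CommRing R] [AddCommGroup A]
    [Module R A] where
  star : A →ₗ[R] A →ₗ[R] A
  dot : A →ₗ[R] A →ₗ[R] A
  star_assoc : ∀ x y z : A, star (star x y) z = star x (star y z)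
  star_perm : ∀ x y z : A, star x (star y z) = star x (star z y)
  dot_comm : ∀ x y : A, dot x y = dot y x
  dot_assoc : ∀ x y z : A, dot (dot x y) z = dot x (dot y z)
  compat₁ : ∀ x y z : A, star x (dot y z) = star x (star y z)
  compat₂ : ∀ x y z : A, star (dot x y) z = dot x (star y z)

/-- in any commutative trialgebra, the identity
`(a ∙ a') * (b * b') = (a * b) ∙ (a' * b')` holds for all elements `a, a', b, b'`. -/
theorem stmt_13 {R A : Type*} [CommRing R] [AddCommGroup A] [Module R A]
    (T : CommTrialgebra R A) (a a' b b' : A) :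
    T.star (T.dot a a') (T.star b b') = T.dot (T.star a b) (T.star a' b') := by
  rw [T.dot_comm a a', ← T.star_assoc, ← T.compat₂, T.dot_comm (T.star a b) a', ← T.compat₂ a' a b]
end

section
/- Let V be a k-module. The module S̄(V) ⊗ S(V) (nonzero symmetric tensors tensor all symmetric tensors), with (X⊗Y)*(X'⊗Y') := X ⊗ (Y·X'·Y') and (X⊗Y)∙(X'⊗Y') := (X·X') ⊗ (Y·Y'), is a commutative trialgebra, and it satisfies the universal property of the free commutative trialgebra on V: any linear map f : V → T into a commutative trialgebra T extends uniquely to a trialgebra morphism S̄(V)⊗S(V) → T sending v ⊗ 1 to f(v). -/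
open TensorProduct

/-!
For any ideal `I` of a commutative algebra `S`, write `a ⬝ s` for right multiplication on the
second factor of `I ⊗ S` and `μ : I ⊗ S → S` for multiplication. Then `a * b = a ⬝ μ b`, and the
trialgebra axioms come down to `μ` being multiplicative and `S`-linear.

For the universal property, a commutative trialgebra `T` is a module over the unitization `T⁺` of
the ring `(T, ∙)` via `t ⬝ (r, u) = r t + t * u`. The universal property of `S` extends `f` to an
algebra map `Φ : S → T⁺`, which sends `S̄` into `T`, and `x ⊗ y ↦ Φ x ⬝ Φ y` is the morphism.
It is unique because `S̄ ⊗ S` is generated by the `ι v ⊗ 1`: products `∙` give all `x ⊗ 1` with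
`x ∈ S̄`, and then `(x ⊗ 1) * (ι v ⊗ y) = x ⊗ ι v y` gives all of `S̄ ⊗ S`.
-/

universe u

namespace CommTrialgebra

variable {R T : Type*} [CommRing R] [AddCommGroup T] [Module R T] (C : CommTrialgebra R T)

theorem star_right_comm (a b c : T) : C.star (C.star a b) c = C.star (C.star a c) b := by
  rw [C.star_assoc, C.star_perm, ← C.star_assoc]

def DotRing (_ : CommTrialgebra R T) : Type _ := T

instance : AddCommGroup C.DotRing := inferInstanceAs (AddCommGroup T)

instance : Module R C.DotRing := inferInstanceAs (Module R T)

def ofDotRing : C.DotRing ≃ₗ[R] T := LinearEquiv.refl R T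

instance : NonUnitalCommRing C.DotRing where
  mul a b := C.ofDotRing.symm (C.dot (C.ofDotRing a) (C.ofDotRing b))
  left_distrib a b c := map_add (C.dot a) b c
  right_distrib a b c := LinearMap.map_add₂ C.dot a b c
  zero_mul a := LinearMap.map_zero₂ C.dot a
  mul_zero a := map_zero (C.dot a)
  mul_assoc := C.dot_assoc
  mul_comm := C.dot_comm

theorem ofDotRing_mul (a b : C.DotRing) :
    C.ofDotRing (a * b) = C.dot (C.ofDotRing a) (C.ofDotRing b) := rfl

instance : SMulCommClass R C.DotRing C.DotRing :=
  ⟨fun r a b => (map_smul (C.dot a) r b).symm⟩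

instance : IsScalarTower R C.DotRing C.DotRing :=
  ⟨fun r a b => LinearMap.map_smul₂ C.dot r a b⟩

def act : T →ₗ[R] Unitization R C.DotRing →ₗ[R] T :=
  (LinearMap.lsmul R T).flip.compl₂ (Unitization.fstHom R C.DotRing).toLinearMap +
    C.star.compl₂ (C.ofDotRing.toLinearMap ∘ₗ Unitization.sndHom R R C.DotRing)

theorem act_apply (t : T) (U : Unitization R C.DotRing) :
    C.act t U = U.fst • t + C.star t (C.ofDotRing U.snd) := rfl

theorem act_one (t : T) : C.act t 1 = t := by
  simp [act_apply]

theorem act_inr (t : T) (u : C.DotRing) :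
    C.act t (Unitization.inr u) = C.star t (C.ofDotRing u) := by
  simp [act_apply]

theorem act_mul (t : T) (U U' : Unitization R C.DotRing) :
    C.act t (U * U') = C.act (C.act t U) U' := by
  simp only [act_apply, Unitization.fst_mul, Unitization.snd_mul, ofDotRing_mul, map_add,
    map_smul, LinearMap.add_apply, LinearMap.smul_apply, C.compat₁, C.star_assoc, smul_add,
    mul_smul, smul_comm U.fst U'.fst]
  abel

theorem star_act (a b : T) (U : Unitization R C.DotRing) :
    C.star a (C.act b U) = C.act (C.star a b) U := by
  simp [act_apply, C.star_assoc]

theorem act_star (a b : T) (U : Unitization R C.DotRing) :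
    C.star (C.act a U) b = C.act (C.star a b) U := by
  simp [act_apply, star_right_comm]

theorem dot_act (a b : T) (U : Unitization R C.DotRing) :
    C.dot a (C.act b U) = C.act (C.dot a b) U := by
  simp [act_apply, C.compat₂]

theorem dot_act_act (a b : T) (U U' : Unitization R C.DotRing) :
    C.dot (C.act a U) (C.act b U') = C.act (C.dot a b) (U * U') := by
  rw [dot_act, C.dot_comm, dot_act, C.dot_comm, act_mul]

end CommTrialgebra

theorem TensorProduct.bilinear_eq_of_tmul {R M N M' N' P : Type*} [CommSemiring R]
    [AddCommMonoid M] [AddCommMonoid N] [AddCommMonoid M'] [AddCommMonoid N'] [AddCommMonoid P]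
    [Module R M] [Module R N] [Module R M'] [Module R N'] [Module R P]
    {F G : M ⊗[R] N →ₗ[R] M' ⊗[R] N' →ₗ[R] P}
    (h : ∀ x y x' y', F (x ⊗ₜ y) (x' ⊗ₜ y') = G (x ⊗ₜ y) (x' ⊗ₜ y')) (a : M ⊗[R] N)
    (b : M' ⊗[R] N') : F a b = G a b :=
  LinearMap.congr_fun₂ (TensorProduct.ext' fun x y => TensorProduct.ext' (h x y)) a b

namespace IdealTensor

variable {R S : Type*} [CommRing R] [CommRing S] [Algebra R S] (I : Ideal S)

def rightAct : I ⊗[R] S →ₗ[R] S →ₗ[R] I ⊗[R] S :=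
  (LinearMap.lTensorHom (M := I) ∘ₗ (LinearMap.mul R S).flip).flip

theorem rightAct_tmul (x : I) (y s : S) : rightAct I (x ⊗ₜ[R] y) s = x ⊗ₜ[R] (y * s) := rfl

def mulMap : I ⊗[R] S →ₗ[R] S :=
  TensorProduct.lift ((LinearMap.mul R S).comp (I.subtype.restrictScalars R))

theorem mulMap_tmul (x : I) (y : S) : mulMap I (x ⊗ₜ[R] y) = x * y := rfl

def mulIdeal : I →ₗ[R] I →ₗ[R] I :=
  LinearMap.mk₂ R (fun x y => ⟨x * y, I.mul_mem_right _ x.2⟩)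
    (fun _ _ _ => Subtype.ext (add_mul _ _ _))
    (fun _ _ _ => Subtype.ext (smul_mul_assoc _ _ _))
    (fun _ _ _ => Subtype.ext (mul_add _ _ _))
    (fun _ _ _ => Subtype.ext (mul_smul_comm _ _ _))

def star : I ⊗[R] S →ₗ[R] I ⊗[R] S →ₗ[R] I ⊗[R] S :=
  (rightAct I).compl₂ (mulMap I)

def dot : I ⊗[R] S →ₗ[R] I ⊗[R] S →ₗ[R] I ⊗[R] S :=
  TensorProduct.map₂ (mulIdeal I) (LinearMap.mul R S)

theorem star_tmul (x x' : I) (y y' : S) :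
    star I (x ⊗ₜ[R] y) (x' ⊗ₜ[R] y') = x ⊗ₜ[R] (y * x' * y') := by
  rw [star, LinearMap.compl₂_apply, mulMap_tmul, rightAct_tmul, mul_assoc]

theorem dot_tmul (x x' : I) (y y' : S) :
    dot I (x ⊗ₜ[R] y) (x' ⊗ₜ[R] y') =
      (⟨x * x', I.mul_mem_right _ x.2⟩ : I) ⊗ₜ[R] (y * y') := rfl

theorem rightAct_rightAct (a : I ⊗[R] S) (s t : S) :
    rightAct I (rightAct I a s) t = rightAct I a (s * t) := by
  induction a using TensorProduct.induction_on with
  | zero => simp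
  | add a a' ha ha' => simp [ha, ha']
  | tmul x y => simp [rightAct_tmul, mul_assoc]

theorem mulMap_rightAct (a : I ⊗[R] S) (s : S) :
    mulMap I (rightAct I a s) = mulMap I a * s := by
  induction a using TensorProduct.induction_on with
  | zero => simp
  | add a a' ha ha' => simp [ha, ha', add_mul]
  | tmul x y => simp [rightAct_tmul, mulMap_tmul, mul_assoc]

theorem mulMap_dot (a b : I ⊗[R] S) : mulMap I (dot I a b) = mulMap I a * mulMap I b :=
  TensorProduct.bilinear_eq_of_tmul (F := (dot I).compr₂ (mulMap I))
    (G := (LinearMap.mul R S).compl₁₂ (mulMap I) (mulMap I))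
    (fun x y x' y' => by simp [dot_tmul, mulMap_tmul, mul_mul_mul_comm]) a b

theorem dot_comm (a b : I ⊗[R] S) : dot I a b = dot I b a :=
  TensorProduct.bilinear_eq_of_tmul (F := dot I) (G := (dot I).flip)
    (fun x y x' y' => by simp [dot_tmul, mul_comm]) a b

theorem dot_rightAct (a b : I ⊗[R] S) (s : S) :
    dot I a (rightAct I b s) = rightAct I (dot I a b) s :=
  TensorProduct.bilinear_eq_of_tmul (F := (dot I).compl₂ ((rightAct I).flip s))
    (G := (dot I).compr₂ ((rightAct I).flip s))
    (fun x y x' y' => by simp [dot_tmul, rightAct_tmul, mul_assoc]) a b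

theorem dot_assoc (a b c : I ⊗[R] S) : dot I (dot I a b) c = dot I a (dot I b c) := by
  refine TensorProduct.bilinear_eq_of_tmul (F := (dot I).compr₂ ((dot I).flip c))
    (G := (dot I).compl₂ ((dot I).flip c)) (fun x y x' y' => ?_) a b
  induction c using TensorProduct.induction_on with
  | zero => simp
  | add c c' hc hc' => simp_all
  | tmul x'' y'' => simp [dot_tmul, mul_assoc]

def commTrialgebra : CommTrialgebra R (I ⊗[R] S) where
  star := star I
  dot := dot I
  star_assoc a b c := by simp [star, rightAct_rightAct, mulMap_rightAct]
  star_perm a b c := by simp [star, mulMap_rightAct, mul_comm]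
  dot_comm := dot_comm I
  dot_assoc := dot_assoc I
  compat₁ a b c := by simp [star, mulMap_rightAct, mulMap_dot]
  compat₂ a b c := by simp [star, dot_rightAct]

section Lift

variable {T : Type*} [AddCommGroup T] [Module R T] (C : CommTrialgebra R T)
  (Φ : S →ₐ[R] Unitization R C.DotRing)

def lift : I ⊗[R] S →ₗ[R] T :=
  TensorProduct.lift <| C.act.compl₁₂
    (C.ofDotRing.toLinearMap ∘ₗ Unitization.sndHom R R C.DotRing ∘ₗ Φ.toLinearMap ∘ₗ
      I.subtype.restrictScalars R)
    Φ.toLinearMap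

theorem lift_tmul (x : I) (y : S) :
    lift I C Φ (x ⊗ₜ[R] y) = C.act (C.ofDotRing (Φ x).snd) (Φ y) := rfl

variable {I C Φ}

theorem inr_snd_of_mem (hΦ : ∀ x ∈ I, (Φ x).fst = 0) {x : S} (hx : x ∈ I) :
    Unitization.inr (Φ x).snd = Φ x :=
  Unitization.ext (hΦ x hx).symm rfl

theorem lift_star (hΦ : ∀ x ∈ I, (Φ x).fst = 0) (a b : I ⊗[R] S) :
    lift I C Φ (star I a b) = C.star (lift I C Φ a) (lift I C Φ b) := by
  refine TensorProduct.bilinear_eq_of_tmul (F := (star I).compr₂ (lift I C Φ))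
    (G := C.star.compl₁₂ (lift I C Φ) (lift I C Φ)) (fun x y x' y' => ?_) a b
  simp only [LinearMap.compr₂_apply, LinearMap.compl₁₂_apply, star_tmul, lift_tmul, map_mul,
    C.star_act, C.act_star, ← C.act_inr, ← C.act_mul, inr_snd_of_mem hΦ x'.2]
  rw [mul_comm (Φ y)]

theorem lift_dot (hΦ : ∀ x ∈ I, (Φ x).fst = 0) (a b : I ⊗[R] S) :
    lift I C Φ (dot I a b) = C.dot (lift I C Φ a) (lift I C Φ b) := by
  refine TensorProduct.bilinear_eq_of_tmul (F := (dot I).compr₂ (lift I C Φ))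
    (G := C.dot.compl₁₂ (lift I C Φ) (lift I C Φ)) (fun x y x' y' => ?_) a b
  have hmul : Φ (x * x') = Unitization.inr ((Φ x).snd * (Φ x').snd) := by
    rw [Unitization.inr_mul, inr_snd_of_mem hΦ x.2, inr_snd_of_mem hΦ x'.2, map_mul]
  rw [LinearMap.compr₂_apply, LinearMap.compl₁₂_apply, dot_tmul, lift_tmul, lift_tmul,
    lift_tmul, C.dot_act_act, hmul, map_mul, Unitization.snd_inr, C.ofDotRing_mul]

end Lift

theorem smul_mem_of_mem_adjoin {M : Type*} [AddCommGroup M] [Module R M] [Module S M]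
    [IsScalarTower R S M] {s : Set S} {N : Submodule R M} (h : ∀ a ∈ s, ∀ m ∈ N, a • m ∈ N)
    {b : S} (hb : b ∈ Algebra.adjoin R s) {m : M} (hm : m ∈ N) : b • m ∈ N := by
  induction hb using Algebra.adjoin_induction generalizing m with
  | mem a ha => exact h a ha m hm
  | algebraMap r => rw [algebraMap_smul]; exact N.smul_mem r hm
  | add b b' _ _ hb hb' => rw [add_smul]; exact N.add_mem (hb hm) (hb' hm)
  | mul b b' _ _ hb hb' => rw [mul_smul]; exact hb (hb' hm)

theorem eq_top_of_star_dot_mem {s : Set S} (hs : Algebra.adjoin R s = ⊤)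
    (P : Submodule R (Ideal.span s ⊗[R] S))
    (hgen : ∀ a (ha : a ∈ s), (⟨a, Ideal.subset_span ha⟩ : Ideal.span s) ⊗ₜ[R] (1 : S) ∈ P)
    (hstar : ∀ a ∈ P, ∀ b ∈ P, star _ a b ∈ P) (hdot : ∀ a ∈ P, ∀ b ∈ P, dot _ a b ∈ P) :
    P = ⊤ := by
  let P₁ : Submodule R (Ideal.span s) := P.comap ((TensorProduct.mk R _ S).flip 1)
  have hP₁ : ∀ x, x ∈ P₁ := by
    have hmul : ∀ b : S, ∀ x ∈ P₁, b • x ∈ P₁ := fun b x hx =>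
      smul_mem_of_mem_adjoin (fun a ha x hx => by
        have h := hdot _ (hgen a ha) _ hx
        rwa [LinearMap.flip_apply, TensorProduct.mk_apply, dot_tmul, mul_one] at h)
        (hs ▸ Algebra.mem_top) hx
    rintro ⟨x, hx⟩
    induction hx using Submodule.span_induction with
    | mem a ha => exact hgen a ha
    | zero => exact P₁.zero_mem
    | add x y _ _ hx hy => exact P₁.add_mem hx hy
    | smul b x _ hx => exact hmul b _ hx
  let P₂ : Submodule R S := ⨅ x, P.comap (TensorProduct.mk R (Ideal.span s) S x)
  have hP₂ : ∀ y : S, y ∈ P₂ := by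
    have hmul : ∀ a ∈ s, ∀ y ∈ P₂, a • y ∈ P₂ := fun a ha y hy => by
      simp only [P₂, Submodule.mem_iInf, Submodule.mem_comap] at hy ⊢
      intro x
      simpa [star_tmul] using hstar _ (hP₁ x) _ (hy ⟨a, Ideal.subset_span ha⟩)
    intro y
    simpa using smul_mem_of_mem_adjoin hmul (hs ▸ Algebra.mem_top)
      (Submodule.mem_iInf _ |>.2 hP₁)
  rw [eq_top_iff, ← TensorProduct.span_tmul_eq_top, Submodule.span_le]
  rintro _ ⟨x, y, rfl⟩
  exact Submodule.mem_iInf _ |>.1 (hP₂ y) x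

theorem hom_ext {T : Type*} [AddCommGroup T] [Module R T] {C : CommTrialgebra R T}
    {s : Set S} (hs : Algebra.adjoin R s = ⊤) {g g' : Ideal.span s ⊗[R] S →ₗ[R] T}
    (hgen : ∀ a (ha : a ∈ s), g ((⟨a, Ideal.subset_span ha⟩ : Ideal.span s) ⊗ₜ[R] (1 : S)) =
      g' ((⟨a, Ideal.subset_span ha⟩ : Ideal.span s) ⊗ₜ[R] (1 : S)))
    (hstar : ∀ a b, g (star _ a b) = C.star (g a) (g b))
    (hstar' : ∀ a b, g' (star _ a b) = C.star (g' a) (g' b))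
    (hdot : ∀ a b, g (dot _ a b) = C.dot (g a) (g b))
    (hdot' : ∀ a b, g' (dot _ a b) = C.dot (g' a) (g' b)) : g = g' := by
  refine LinearMap.eqLocus_eq_top.1 <| eq_top_of_star_dot_mem hs _ hgen ?_ ?_
  · intro a ha b hb
    rw [LinearMap.mem_eqLocus] at ha hb ⊢
    rw [hstar, hstar', ha, hb]
  · intro a ha b hb
    rw [LinearMap.mem_eqLocus] at ha hb ⊢
    rw [hdot, hdot', ha, hb]

end IdealTensor

theorem adjoin_range_eq_top_of_existsUnique {R V : Type*} {S : Type u} [CommRing R]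
    [AddCommGroup V] [Module R V] [CommRing S] [Algebra R S] (ι : V →ₗ[R] S)
    (hS : ∀ (A : Type u) [CommRing A] [Algebra R A] (f : V →ₗ[R] A),
      ∃! g : S →ₐ[R] A, ∀ v : V, g (ι v) = f v) :
    Algebra.adjoin R (Set.range ι) = ⊤ := by
  let A := Algebra.adjoin R (Set.range ι)
  obtain ⟨j, hj, -⟩ := hS A
    (ι.codRestrict (Subalgebra.toSubmodule A) fun v => Algebra.subset_adjoin ⟨v, rfl⟩)
  have hj : A.val.comp j = AlgHom.id R S :=
    (hS S ι).unique (fun v => congrArg Subtype.val (hj v)) fun _ => rfl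
  refine eq_top_iff.2 fun x _ => ?_
  rw [← AlgHom.id_apply (R := R) x, ← hj]
  exact (j x).2

/-- free commutative trialgebra: Let `V` be a module over a
commutative ring `R`, and let `S` (together with `ι : V →ₗ[R] S`) be the symmetric
algebra of `V`, characterized by its universal property among commutative
`R`-algebras (hypothesis `hS`).  Let `S̄` be its augmentation ideal, the ideal
generated by the image of `V`.  Then the module `S̄ ⊗ S` carries a commutative
trialgebra structure with `(X⊗Y) * (X'⊗Y') = X ⊗ (Y·X'·Y')` and
`(X⊗Y) ∙ (X'⊗Y') = (X·X') ⊗ (Y·Y')` on pure tensors, and it satisfies the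
universal property of the free commutative trialgebra on `V`: every linear map
`f : V → T` to a commutative trialgebra `T` extends uniquely to a morphism of
trialgebras `S̄ ⊗ S → T` sending `ι v ⊗ 1` to `f v`. -/
theorem stmt_14 (R V S : Type) [CommRing R] [AddCommGroup V] [Module R V]
    [CommRing S] [Algebra R S] (ι : V →ₗ[R] S)
    (hS : ∀ (A : Type) [CommRing A] [Algebra R A] (f : V →ₗ[R] A),
      ∃! g : S →ₐ[R] A, ∀ v : V, g (ι v) = f v) :
    ∃ CT : CommTrialgebra R ((Ideal.span (Set.range ι.toFun) : Ideal S) ⊗[R] S),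
      (∀ (x x' : (Ideal.span (Set.range ι.toFun) : Ideal S)) (y y' : S),
        CT.star (x ⊗ₜ[R] y) (x' ⊗ₜ[R] y') = x ⊗ₜ[R] (y * (x' : S) * y')) ∧
      (∀ (x x' : (Ideal.span (Set.range ι.toFun) : Ideal S)) (y y' : S),
        CT.dot (x ⊗ₜ[R] y) (x' ⊗ₜ[R] y')
          = (⟨(x : S) * (x' : S), Ideal.mul_mem_right _ _ x.2⟩ :
              (Ideal.span (Set.range ι.toFun) : Ideal S)) ⊗ₜ[R] (y * y')) ∧
      (∀ (T : Type) [AddCommGroup T] [Module R T] (CTT : CommTrialgebra R T)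
          (f : V →ₗ[R] T),
        ∃! g : ((Ideal.span (Set.range ι.toFun) : Ideal S) ⊗[R] S) →ₗ[R] T,
          (∀ v : V,
            g ((⟨ι v, Ideal.subset_span ⟨v, rfl⟩⟩ :
                (Ideal.span (Set.range ι.toFun) : Ideal S)) ⊗ₜ[R] (1 : S))
              = f v) ∧
          (∀ a b, g (CT.star a b) = CTT.star (g a) (g b)) ∧
          (∀ a b, g (CT.dot a b) = CTT.dot (g a) (g b))) := by
  refine ⟨IdealTensor.commTrialgebra _, IdealTensor.star_tmul _, IdealTensor.dot_tmul _,
    fun T _ _ C f => ?_⟩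
  obtain ⟨Φ, hΦ, -⟩ := hS (Unitization R C.DotRing)
    (Unitization.inrHom R R C.DotRing ∘ₗ C.ofDotRing.symm.toLinearMap ∘ₗ f)
  have hΦI : ∀ x ∈ Ideal.span (Set.range ι.toFun), (Φ x).fst = 0 := fun x hx =>
    (Ideal.span_le (I := RingHom.ker ((Unitization.fstHom R C.DotRing).comp Φ))).2
      (by rintro _ ⟨v, rfl⟩; simp [hΦ]) hx
  have hgen : ∀ v, IdealTensor.lift _ C Φ
      ((⟨ι v, Ideal.subset_span ⟨v, rfl⟩⟩ : Ideal.span (Set.range ι.toFun)) ⊗ₜ[R] (1 : S)) =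
      f v := fun v => by
    simp [IdealTensor.lift_tmul, hΦ, C.act_one]
  refine ⟨IdealTensor.lift _ C Φ, ⟨hgen, IdealTensor.lift_star hΦI, IdealTensor.lift_dot hΦI⟩,
    fun g ⟨hg_gen, hg_star, hg_dot⟩ => ?_⟩
  refine IdealTensor.hom_ext (adjoin_range_eq_top_of_existsUnique ι hS) ?_ hg_star
    (IdealTensor.lift_star hΦI) hg_dot (IdealTensor.lift_dot hΦI)
  rintro _ ⟨v, rfl⟩
  exact (hg_gen v).trans (hgen v).symm
end
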